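/- Let d | q-1 with d ≠ 1 and let (γ^((q-1)/d), 0, H) ∈ S. Then the subgroups K of AGL(1,F_q) with S(γ^((q-1)/d), 0, H) ≤ K are precisely the subgroups of the form S(γ^((q-1)/d1), 0, H1), where d | d1 | q-1, H ⊆ H1, and (γ^((q-1)/d1), 0, H1) ∈ S. -/

import Mathlib

open Matrix
open scoped Classical

abbrev GL2 (F : Type) [Field F] := GL (Fin 2) F

/-- `AGL(1,F)`: the subgroup of `GL(2,F)` of matrices of the form `[[a,b],[0,1]]`. -/
def AGL (F : Type) [Field F] : Subgroup (GL2 F) where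
  carrier := {g | (g : Matrix (Fin 2) (Fin 2) F) 1 0 = 0 ∧
                  (g : Matrix (Fin 2) (Fin 2) F) 1 1 = 1}
  one_mem' := by
    constructor <;> simp [Matrix.one_apply]
  mul_mem' := by
    rintro a b ⟨ha0, ha1⟩ ⟨hb0, hb1⟩
    constructor <;>
      simp [Units.val_mul, Matrix.mul_apply, Fin.sum_univ_two, ha0, ha1, hb0, hb1]
  inv_mem' := by
    rintro g ⟨h0, h1⟩
    have hdet : ((g : Matrix (Fin 2) (Fin 2) F) 0 0) ≠ 0 := by
      have hu : IsUnit ((g : Matrix (Fin 2) (Fin 2) F).det) :=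
        (Matrix.isUnit_iff_isUnit_det _).1 g.isUnit
      rw [Matrix.det_fin_two, h0, h1] at hu
      simpa using hu.ne_zero
    have hinv : ((g⁻¹ : GL2 F) : Matrix (Fin 2) (Fin 2) F)
        = ((g : Matrix (Fin 2) (Fin 2) F))⁻¹ := Matrix.coe_units_inv g
    constructor <;>
      simp [hinv, Matrix.inv_def, Matrix.adjugate_fin_two, Matrix.det_fin_two,
        h0, h1, hdet]

/-- Membership of a triple `(a,b,H)` in the set `𝒮`: `a ∈ F*`, `H` is an additive
subgroup of `F` closed under multiplication by the subfield `F_p(a)` generated by `a`,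
and `b = 0` when `a = 1`. -/
def memS {F : Type} [Field F] (a b : F) (H : AddSubgroup F) : Prop :=
  a ≠ 0 ∧ (a = 1 → b = 0) ∧ ∀ x ∈ Subfield.closure {a}, ∀ h ∈ H, x * h ∈ H

/-- `S(a,b,H)`: the subgroup of `GL(2,F)` generated by the matrix `[[a,b],[0,1]]`
together with the matrices `[[1,h],[0,1]]`, `h ∈ H`. -/
def Sgrp {F : Type} [Field F] (a b : F) (H : AddSubgroup F) : Subgroup (GL2 F) :=
  Subgroup.closure {g : GL2 F |
    (g : Matrix (Fin 2) (Fin 2) F) = !![a, b; 0, 1] ∨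
    ∃ h ∈ H, (g : Matrix (Fin 2) (Fin 2) F) = !![1, h; 0, 1]}

/-- `pPow p d` is `p(d)`: the smallest (positive) power of `p` that is `≡ 1 (mod d)`. -/
noncomputable def pPow (p d : ℕ) : ℕ := sInf {m | (∃ k : ℕ, 1 ≤ k ∧ m = p ^ k) ∧ m % d = 1 % d}

/-!
Write `affine u b` for `[[u,b],[0,1]]` and `dilation u` for `affine u 0`. Let `K` lie between
`S(a,0,H)` and `AGL(1,F_q)`, where `a = γ^((q-1)/d) ≠ 1`, and let `H₁` be the group of
translations in `K`. Conjugating by a dilation `dilation u ∈ K` multiplies `H₁` by `u`, so `H₁`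
is a module over the subfield generated by such `u`; in particular `(a - 1)⁻¹ H₁ ⊆ H₁`. For
`affine u b ∈ K`, the commutator of `dilation a` and `affine u b` is the translation by
`(a - 1) b`, hence `b ∈ H₁` and `K = H₁ ⋊ T` with `T = {u | dilation u ∈ K}`. Finally `T`, a
subgroup of the cyclic group `F_q^*`, is the group of `|T|`-th roots of unity, generated by
`γ^((q-1)/|T|)`, and `d ∣ |T|` because `a ∈ T` has order `d`.
-/

lemma Subring.inv_mem_of_finite {F : Type} [Field F] [Finite F] (s : Subring F) {x : F}
    (hx : x ∈ s) : x⁻¹ ∈ s := by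
  rcases eq_or_ne x 0 with rfl | hx0
  · simp
  obtain ⟨n, hn⟩ : (Units.mk0 x hx0)⁻¹ ∈ Submonoid.powers (Units.mk0 x hx0) :=
    mem_powers_iff_mem_zpowers.2 (inv_mem (Subgroup.mem_zpowers _))
  have hn' := congrArg Units.val hn
  simp only [Units.val_pow_eq_pow_val, Units.val_inv_eq_inv_val, Units.val_mk0] at hn'
  exact hn' ▸ pow_mem hx n

def AddSubgroup.multipliers {F : Type} [Field F] (H : AddSubgroup F) : Subring F where
  carrier := {x | ∀ h ∈ H, x * h ∈ H}
  zero_mem' h _ := by simp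
  one_mem' h hh := by simpa using hh
  add_mem' hx hy h hh := by rw [add_mul]; exact H.add_mem (hx h hh) (hy h hh)
  neg_mem' hx h hh := by rw [neg_mul]; exact H.neg_mem (hx h hh)
  mul_mem' hx hy h hh := by rw [mul_assoc]; exact hx _ (hy h hh)

lemma Subgroup.eq_rootsOfUnity_natCard {R : Type*} [CommRing R] [IsDomain R] (T : Subgroup Rˣ)
    [Finite T] : T = rootsOfUnity (Nat.card T) R :=
  Subgroup.eq_of_le_of_card_ge
    (fun x hx => (mem_rootsOfUnity _ x).2 (orderOf_dvd_iff_pow_eq_one.1 (T.orderOf_dvd_natCard hx)))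
    (card_rootsOfUnity R _)

namespace IsPrimitiveRoot

variable {M : Type*} [CommMonoid M] {ζ : M} {N d : ℕ}

lemma pow_div_of_dvd (hζ : IsPrimitiveRoot ζ N) (hN : N ≠ 0) (hd : d ∣ N) :
    IsPrimitiveRoot (ζ ^ (N / d)) d := by
  have := hζ.pow_of_dvd (Nat.div_ne_zero_iff_of_dvd hd |>.2 ⟨hN, ?_⟩) (Nat.div_dvd_of_dvd hd)
  · rwa [Nat.div_div_self hd hN] at this
  · rintro rfl; exact hN (Nat.eq_zero_of_zero_dvd hd)

lemma zpowers_pow_div_natCard {R : Type*} [CommRing R] [IsDomain R] {ζ : Rˣ}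
    (hζ : IsPrimitiveRoot ζ N) (hN : N ≠ 0) (T : Subgroup Rˣ) [Finite T]
    (hT : Nat.card T ∣ N) :
    Subgroup.zpowers (ζ ^ (N / Nat.card T)) = T := by
  have : NeZero (Nat.card T) := ⟨Nat.card_pos.ne'⟩
  rw [(hζ.pow_div_of_dvd hN hT).zpowers_eq, ← T.eq_rootsOfUnity_natCard]

end IsPrimitiveRoot

lemma isPrimitiveRoot_mk0_of_forall_eq_pow {F : Type} [Field F] [Fintype F] {γ : F}
    (hγ0 : γ ≠ 0) (hγ : ∀ x : F, x ≠ 0 → ∃ k : ℕ, x = γ ^ k) :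
    IsPrimitiveRoot (Units.mk0 γ hγ0) (Fintype.card F - 1) := by
  rw [IsPrimitiveRoot.iff_orderOf, ← Nat.card_eq_fintype_card, ← Nat.card_units]
  refine orderOf_eq_card_of_forall_mem_zpowers fun x => ?_
  obtain ⟨k, hk⟩ := hγ x x.ne_zero
  exact Subgroup.mem_zpowers_iff.2 ⟨k, Units.ext (by simp [hk])⟩

section AffineGroup

variable {F : Type} [Field F]

def affine (u : Fˣ) (b : F) : GL2 F :=
  Matrix.GeneralLinearGroup.mkOfDetNeZero !![(u : F), b; 0, 1] (by simp [Matrix.det_fin_two])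

@[simp] lemma coe_affine (u : Fˣ) (b : F) :
    (affine u b : Matrix (Fin 2) (Fin 2) F) = !![(u : F), b; 0, 1] := rfl

lemma affine_mul (u v : Fˣ) (b c : F) :
    affine u b * affine v c = affine (u * v) (u * c + b) := by
  ext : 1
  simp

lemma affine_one_zero : affine (1 : Fˣ) 0 = 1 := by
  ext : 1
  simp [Matrix.one_fin_two]

lemma inv_affine_one (h : F) : (affine 1 h)⁻¹ = affine 1 (-h) :=
  inv_eq_of_mul_eq_one_right (by rw [affine_mul, one_mul]; simpa using affine_one_zero)

def dilation : Fˣ →* GL2 F where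
  toFun u := affine u 0
  map_one' := affine_one_zero
  map_mul' u v := by simp [affine_mul]

@[simp] lemma dilation_apply (u : Fˣ) : dilation u = affine u 0 := rfl

lemma affine_eq_mul_dilation (u : Fˣ) (b : F) : affine u b = affine 1 b * dilation u := by
  simp [affine_mul]

lemma dilation_mul_affine_one (u : Fˣ) (h : F) :
    dilation u * affine 1 h = affine 1 (u * h) * dilation u := by
  simp [affine_mul]

lemma exists_affine_eq_of_mem_AGL {g : GL2 F} (hg : g ∈ AGL F) : ∃ u b, g = affine u b := by
  obtain ⟨h10, h11⟩ := hg
  have h00 : (g : Matrix (Fin 2) (Fin 2) F) 0 0 ≠ 0 := by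
    have hdet := (Matrix.isUnit_iff_isUnit_det _).1 g.isUnit
    rw [Matrix.det_fin_two, h10, h11] at hdet
    simpa using hdet.ne_zero
  refine ⟨Units.mk0 _ h00, (g : Matrix (Fin 2) (Fin 2) F) 0 1, Units.ext ?_⟩
  ext i j
  fin_cases i <;> fin_cases j <;> simp [h10, h11]

lemma Sgrp_le_AGL (a b : F) (H : AddSubgroup F) : Sgrp a b H ≤ AGL F := by
  refine (Subgroup.closure_le _).2 ?_
  rintro g (hg | ⟨h, -, hg⟩) <;> exact ⟨by simp [hg], by simp [hg]⟩

def translationSubgroup (K : Subgroup (GL2 F)) : AddSubgroup F where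
  carrier := {h | affine 1 h ∈ K}
  zero_mem' := by simp [affine_one_zero]
  add_mem' {x y} hx hy := by
    simpa [affine_mul, add_comm] using K.mul_mem hx hy
  neg_mem' {x} hx := by
    simpa [inv_affine_one] using K.inv_mem hx

lemma mem_translationSubgroup {K : Subgroup (GL2 F)} {h : F} :
    h ∈ translationSubgroup K ↔ affine 1 h ∈ K := Iff.rfl

lemma Sgrp_le_iff (u : Fˣ) (b : F) (H : AddSubgroup F) (K : Subgroup (GL2 F)) :
    Sgrp (u : F) b H ≤ K ↔ affine u b ∈ K ∧ H ≤ translationSubgroup K := by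
  refine ⟨fun hK => ⟨hK (Subgroup.subset_closure (Or.inl rfl)),
    fun h hh => hK (Subgroup.subset_closure (Or.inr ⟨h, hh, by simp⟩))⟩, ?_⟩
  rintro ⟨hub, hH⟩
  refine (Subgroup.closure_le _).2 ?_
  rintro g (hg | ⟨h, hh, hg⟩)
  · rwa [show g = affine u b from Units.ext hg]
  · rw [show g = affine 1 h from Units.ext (by simpa using hg)]
    exact hH hh

lemma Sgrp_pow_le_Sgrp (u : Fˣ) (m : ℕ) {H H₁ : AddSubgroup F} (hH : H ≤ H₁) :
    Sgrp ((u ^ m : Fˣ) : F) 0 H ≤ Sgrp (u : F) 0 H₁ := by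
  obtain ⟨hu, hH₁⟩ := (Sgrp_le_iff u 0 H₁ _).1 le_rfl
  refine (Sgrp_le_iff _ 0 H _).2 ⟨?_, hH.trans hH₁⟩
  rw [← dilation_apply, map_pow]
  exact pow_mem hu m

lemma mul_mem_translationSubgroup {K : Subgroup (GL2 F)} {u : Fˣ} (hu : dilation u ∈ K)
    {h : F} (hh : h ∈ translationSubgroup K) : (u : F) * h ∈ translationSubgroup K := by
  have hconj := K.mul_mem (K.mul_mem hu hh) (K.inv_mem hu)
  rwa [dilation_mul_affine_one, mul_inv_cancel_right] at hconj

lemma eq_Sgrp_of_comap_dilation_eq_zpowers {K : Subgroup (GL2 F)} (hKA : K ≤ AGL F)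
    (hsplit : ∀ u b, affine u b ∈ K → b ∈ translationSubgroup K) {a : Fˣ}
    (ha : K.comap dilation = Subgroup.zpowers a) : K = Sgrp (a : F) 0 (translationSubgroup K) := by
  have haK : dilation a ∈ K := Subgroup.mem_comap.1 (ha ▸ Subgroup.mem_zpowers a)
  refine le_antisymm (fun g hg => ?_) ((Sgrp_le_iff a 0 _ K).2 ⟨haK, le_rfl⟩)
  obtain ⟨u, b, rfl⟩ := exists_affine_eq_of_mem_AGL (hKA hg)
  obtain ⟨haS, hHS⟩ := (Sgrp_le_iff a 0 (translationSubgroup K) _).1 le_rfl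
  have hb := hsplit u b hg
  have hu : u ∈ K.comap dilation := by
    rw [Subgroup.mem_comap, ← inv_mul_cancel_left (affine 1 b) (dilation u),
      ← affine_eq_mul_dilation]
    exact K.mul_mem (K.inv_mem hb) hg
  obtain ⟨k, rfl⟩ := Subgroup.mem_zpowers_iff.1 (ha ▸ hu)
  rw [affine_eq_mul_dilation, map_zpow]
  exact mul_mem (hHS hb) (zpow_mem (show dilation a ∈ _ from haS) k)

lemma val_mem_multipliers_translationSubgroup {K : Subgroup (GL2 F)} {u : Fˣ}
    (hu : dilation u ∈ K) : (u : F) ∈ (translationSubgroup K).multipliers :=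
  fun _ hh => mul_mem_translationSubgroup hu hh

lemma memS_translationSubgroup [Finite F] {K : Subgroup (GL2 F)} {u : Fˣ}
    (hu : dilation u ∈ K) : memS (u : F) 0 (translationSubgroup K) := by
  refine ⟨u.ne_zero, fun _ => rfl, fun x hx => ?_⟩
  let R := (translationSubgroup K).multipliers
  have hle : Subfield.closure {(u : F)} ≤ R.toSubfield (fun _ => R.inv_mem_of_finite) :=
    Subfield.closure_le.2 (Set.singleton_subset_iff.2
      (val_mem_multipliers_translationSubgroup hu))
  exact hle hx

lemma mem_translationSubgroup_of_affine_mem [Finite F] {K : Subgroup (GL2 F)} {a : Fˣ}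
    (ha : dilation a ∈ K) (ha1 : a ≠ 1) {u : Fˣ} {b : F} (hub : affine u b ∈ K) :
    b ∈ translationSubgroup K := by
  let R := (translationSubgroup K).multipliers
  have hcomm : dilation a * affine u b * (affine u b * dilation a)⁻¹
      = affine 1 (((a : F) - 1) * b) := by
    rw [mul_inv_eq_iff_eq_mul]
    simp only [dilation_apply, affine_mul]
    congr 1
    · rw [one_mul, mul_comm]
    · simp only [Units.val_one, mul_zero, one_mul, add_zero, zero_add]
      ring
  have hsub : (a : F) - 1 ∈ R :=
    R.sub_mem (val_mem_multipliers_translationSubgroup ha) R.one_mem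
  have hne : (a : F) - 1 ≠ 0 := sub_ne_zero.2 (Units.val_eq_one.not.2 ha1)
  have hmem : ((a : F) - 1) * b ∈ translationSubgroup K := by
    rw [mem_translationSubgroup, ← hcomm]
    exact K.mul_mem (K.mul_mem ha hub) (K.inv_mem (K.mul_mem hub ha))
  simpa [← mul_assoc, hne] using R.inv_mem_of_finite hsub _ hmem

end AffineGroup

theorem stmt9_general (F : Type) [Field F] [Fintype F] (q : ℕ) (hq : Fintype.card F = q)
    (γ : F) (hγ0 : γ ≠ 0) (hγ : ∀ x : F, x ≠ 0 → ∃ k : ℕ, x = γ ^ k)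
    (d : ℕ) (hd : d ∣ q - 1) (hdne : d ≠ 1) (H : AddSubgroup F)
    (K : Subgroup (GL2 F)) :
    (Sgrp (γ ^ ((q - 1) / d)) 0 H ≤ K ∧ K ≤ AGL F) ↔
      ∃ (d1 : ℕ) (H1 : AddSubgroup F), d ∣ d1 ∧ d1 ∣ q - 1 ∧ H ≤ H1 ∧
        memS (γ ^ ((q - 1) / d1)) 0 H1 ∧ K = Sgrp (γ ^ ((q - 1) / d1)) 0 H1 := by
  have hN : q - 1 ≠ 0 := by have := Fintype.one_lt_card (α := F); omega
  set ζ := Units.mk0 γ hγ0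
  have hζ : IsPrimitiveRoot ζ (q - 1) := hq ▸ isPrimitiveRoot_mk0_of_forall_eq_pow hγ0 hγ
  have hval (e : ℕ) : γ ^ e = ((ζ ^ e : Fˣ) : F) := by simp [ζ]
  simp only [hval]
  have ha : IsPrimitiveRoot (ζ ^ ((q - 1) / d)) d := hζ.pow_div_of_dvd hN hd
  constructor
  · rintro ⟨hK, hKA⟩
    obtain ⟨haK, hHK⟩ := (Sgrp_le_iff _ 0 H K).1 hK
    have hcard : Nat.card (K.comap dilation) ∣ q - 1 := by
      rw [← hq, ← Nat.card_eq_fintype_card, ← Nat.card_units]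
      exact Subgroup.card_subgroup_dvd_card _
    have hT := hζ.zpowers_pow_div_natCard hN _ hcard
    have ha1 : ζ ^ ((q - 1) / d) ≠ 1 := fun h => hdne (by rw [ha.eq_orderOf, h, orderOf_one])
    refine ⟨_, _, ha.eq_orderOf ▸ Subgroup.orderOf_dvd_natCard _ haK, hcard, hHK,
      memS_translationSubgroup (Subgroup.mem_comap.1 (hT.le (Subgroup.mem_zpowers _))),
      eq_Sgrp_of_comap_dilation_eq_zpowers hKA
        (fun _ _ => mem_translationSubgroup_of_affine_mem haK ha1) hT.symm⟩
  · rintro ⟨d1, H1, hdd1, hd1, hHH1, -, rfl⟩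
    refine ⟨?_, Sgrp_le_AGL _ _ _⟩
    rw [← Nat.div_mul_div hd1 hdd1, pow_mul]
    exact Sgrp_pow_le_Sgrp _ _ hHH1

/-- For `d ∣ q-1`, `d ≠ 1`, and `(γ^((q-1)/d),0,H) ∈ 𝒮`, the subgroups of
`AGL(1,F_q)` containing `S(γ^((q-1)/d),0,H)` are precisely the
`S(γ^((q-1)/d₁),0,H₁)` with `d ∣ d₁ ∣ q-1`, `H ⊆ H₁`, `(γ^((q-1)/d₁),0,H₁) ∈ 𝒮`. -/
theorem stmt9 (F : Type) [Field F] [Fintype F] (q : ℕ) (hq : Fintype.card F = q)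
    (γ : F) (hγ0 : γ ≠ 0) (hγ : ∀ x : F, x ≠ 0 → ∃ k : ℕ, x = γ ^ k)
    (d : ℕ) (hd : d ∣ q - 1) (hdne : d ≠ 1) (H : AddSubgroup F)
    (hS : memS (γ ^ ((q - 1) / d)) 0 H) (K : Subgroup (GL2 F)) :
    (Sgrp (γ ^ ((q - 1) / d)) 0 H ≤ K ∧ K ≤ AGL F) ↔
      ∃ (d1 : ℕ) (H1 : AddSubgroup F), d ∣ d1 ∧ d1 ∣ q - 1 ∧ H ≤ H1 ∧
        memS (γ ^ ((q - 1) / d1)) 0 H1 ∧ K = Sgrp (γ ^ ((q - 1) / d1)) 0 H1 :=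
  stmt9_general F q hq γ hγ0 hγ d hd hdne H K
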